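/- Let ρ and ρ' be positive semidefinite d×d matrices. Then ∫₀^∞ ‖χ_{≥√a}(ρ) − χ_{≥√a}(ρ')‖_F² da ≤ ‖ρ − ρ'‖_F · ‖ρ + ρ'‖_F. -/

import Mathlib

open Matrix ComplexOrder

/-- The Frobenius norm of a complex square matrix: `(Tr(AᴴA))^{1/2}`. -/
noncomputable def frobNorm {d : ℕ} (A : Matrix (Fin d) (Fin d) ℂ) : ℝ :=
  Real.sqrt ((Aᴴ * A).trace.re)

/-- The Schatten-1 (nuclear) norm: the sum of singular values, i.e. `Tr((AᴴA)^{1/2})`. -/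
noncomputable def nucNorm {d : ℕ} (A : Matrix (Fin d) (Fin d) ℂ) : ℝ :=
  ((((Matrix.posSemidef_conjTranspose_mul_self A).1.eigenvectorUnitary : Matrix (Fin d) (Fin d) ℂ) *
    Matrix.diagonal ((fun x : ℝ => (x : ℂ)) ∘ (Real.sqrt ·) ∘ (Matrix.posSemidef_conjTranspose_mul_self A).1.eigenvalues) *
    (star (Matrix.posSemidef_conjTranspose_mul_self A).1.eigenvectorUnitary : Matrix (Fin d) (Fin d) ℂ))).trace.re

/-- The spectral projection of a Hermitian matrix onto the direct sum of eigenspaces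
with eigenvalue at least `t`. -/
noncomputable def specProjGE {d : ℕ} {H : Matrix (Fin d) (Fin d) ℂ} (hH : H.IsHermitian)
    (t : ℝ) : Matrix (Fin d) (Fin d) ℂ :=
  (hH.eigenvectorUnitary : Matrix (Fin d) (Fin d) ℂ) *
    Matrix.diagonal (fun i => if t ≤ hH.eigenvalues i then (1 : ℂ) else 0) *
    (hH.eigenvectorUnitary : Matrix (Fin d) (Fin d) ℂ)ᴴ

/-! Write `ρ = U diag(λ) Uᴴ`, `ρ' = V diag(μ) Vᴴ` and `cᵢⱼ = |(UᴴV)ᵢⱼ|²`. Conjugating by `Uᴴ`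
and `V` turns `U diag(f) Uᴴ - V diag(g) Vᴴ` into the Schur product of `(fᵢ - gⱼ)` with `UᴴV`, so
its squared Frobenius norm is `∑ cᵢⱼ |fᵢ - gⱼ|²`. For the spectral projections at `√a` one has
`fᵢ = 1[a ≤ λᵢ²]` and `gⱼ = 1[a ≤ μⱼ²]`, so the integral over `a` is
`∑ cᵢⱼ |λᵢ² - μⱼ²| = ∑ cᵢⱼ |λᵢ - μⱼ| (λᵢ + μⱼ)`. Cauchy–Schwarz with weights `cᵢⱼ` bounds this
by the square roots of `∑ cᵢⱼ (λᵢ - μⱼ)² = ‖ρ - ρ'‖²` and `∑ cᵢⱼ (λᵢ + μⱼ)² = ‖ρ + ρ'‖²`. -/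

open scoped Interval
open MeasureTheory

namespace Matrix

section Frobenius

variable {m n 𝕜 : Type*} [Fintype m] [Fintype n] [RCLike 𝕜]

lemma re_trace_conjTranspose_mul_self (A : Matrix m n 𝕜) :
    RCLike.re (Aᴴ * A).trace = ∑ i, ∑ j, ‖A i j‖ ^ 2 := by
  simp only [trace, diag_apply, mul_apply, conjTranspose_apply, RCLike.star_def,
    RCLike.conj_mul, map_sum, ← RCLike.ofReal_pow, RCLike.ofReal_re]
  exact Finset.sum_comm

variable [DecidableEq m] [DecidableEq n]

lemma trace_conjTranspose_mul_self_unitary_mul_mul {U : Matrix m m 𝕜} {V : Matrix n n 𝕜}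
    (hU : U ∈ unitaryGroup m 𝕜) (hV : V ∈ unitaryGroup n 𝕜) (A : Matrix m n 𝕜) :
    ((Uᴴ * A * V)ᴴ * (Uᴴ * A * V)).trace = (Aᴴ * A).trace := by
  have hUU : U * Uᴴ = 1 := mem_unitaryGroup_iff.mp hU
  have hVV : V * Vᴴ = 1 := mem_unitaryGroup_iff.mp hV
  calc ((Uᴴ * A * V)ᴴ * (Uᴴ * A * V)).trace = (Vᴴ * (Aᴴ * (U * Uᴴ) * A) * V).trace := by
        simp only [conjTranspose_mul, conjTranspose_conjTranspose, Matrix.mul_assoc]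
    _ = (Aᴴ * A * (V * Vᴴ)).trace := by
        rw [trace_mul_comm, ← Matrix.mul_assoc, trace_mul_comm, hUU, Matrix.mul_one,
          Matrix.mul_assoc]
    _ = (Aᴴ * A).trace := by rw [hVV, Matrix.mul_one]

lemma unitary_conj_diagonal_sub_apply {U V : Matrix n n 𝕜} (hU : U ∈ unitaryGroup n 𝕜)
    (hV : V ∈ unitaryGroup n 𝕜) (f g : n → 𝕜) (i j : n) :
    (Uᴴ * (U * diagonal f * Uᴴ - V * diagonal g * Vᴴ) * V) i j = (f i - g j) * (Uᴴ * V) i j := by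
  have hU' : Uᴴ * U = 1 := mem_unitaryGroup_iff'.mp hU
  have hV' : Vᴴ * V = 1 := mem_unitaryGroup_iff'.mp hV
  have : Uᴴ * (U * diagonal f * Uᴴ - V * diagonal g * Vᴴ) * V
      = diagonal f * (Uᴴ * V) - (Uᴴ * V) * diagonal g := by
    simp only [Matrix.mul_sub, Matrix.sub_mul, ← Matrix.mul_assoc, hU', Matrix.one_mul]
    simp only [Matrix.mul_assoc, hV', Matrix.mul_one]
  rw [this, sub_apply, diagonal_mul, mul_diagonal, sub_mul, mul_comm (g j)]

lemma re_trace_conjTranspose_mul_self_conj_diagonal_sub {U V : Matrix n n 𝕜}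
    (hU : U ∈ unitaryGroup n 𝕜) (hV : V ∈ unitaryGroup n 𝕜) (f g : n → 𝕜) :
    RCLike.re ((U * diagonal f * Uᴴ - V * diagonal g * Vᴴ)ᴴ *
        (U * diagonal f * Uᴴ - V * diagonal g * Vᴴ)).trace
      = ∑ i, ∑ j, ‖(Uᴴ * V) i j‖ ^ 2 * ‖f i - g j‖ ^ 2 := by
  rw [← trace_conjTranspose_mul_self_unitary_mul_mul hU hV, re_trace_conjTranspose_mul_self]
  simp only [unitary_conj_diagonal_sub_apply hU hV, norm_mul, mul_pow, mul_comm]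

end Frobenius

lemma IsHermitian.eq_eigenvectorUnitary_mul_diagonal_mul {n 𝕜 : Type*} [Fintype n]
    [DecidableEq n] [RCLike 𝕜] {A : Matrix n n 𝕜} (hA : A.IsHermitian) :
    A = (hA.eigenvectorUnitary : Matrix n n 𝕜) * diagonal (RCLike.ofReal ∘ hA.eigenvalues) *
      (hA.eigenvectorUnitary : Matrix n n 𝕜)ᴴ := by
  conv_lhs => rw [hA.spectral_theorem, Unitary.conjStarAlgAut_apply, star_eq_conjTranspose]

end Matrix

lemma frobNorm_conj_diagonal_sub {d : ℕ} {U V : Matrix (Fin d) (Fin d) ℂ}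
    (hU : U ∈ unitaryGroup (Fin d) ℂ) (hV : V ∈ unitaryGroup (Fin d) ℂ) (f g : Fin d → ℂ) :
    frobNorm (U * diagonal f * Uᴴ - V * diagonal g * Vᴴ)
      = √(∑ i, ∑ j, ‖(Uᴴ * V) i j‖ ^ 2 * ‖f i - g j‖ ^ 2) :=
  congrArg Real.sqrt (re_trace_conjTranspose_mul_self_conj_diagonal_sub hU hV f g)

lemma norm_ite_sqrt_le_sub_ite_sqrt_le_sq {x y : ℝ} (hx : 0 ≤ x) (hy : 0 ≤ y) (a : ℝ) :
    ‖(if √a ≤ x then (1 : ℂ) else 0) - (if √a ≤ y then 1 else 0)‖ ^ 2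
      = (Ι (x ^ 2) (y ^ 2)).indicator 1 a := by
  classical
  simp only [Real.sqrt_le_left hx, Real.sqrt_le_left hy, Set.indicator_apply, Set.mem_uIoc,
    Pi.one_apply]
  split_ifs <;> simp <;> grind

lemma integral_Ioi_indicator_uIoc {x y : ℝ} (hx : 0 ≤ x) (hy : 0 ≤ y) :
    ∫ a in Set.Ioi 0, (Ι x y).indicator 1 a = |y - x| := by
  have hsub : Ι x y ⊆ Set.Ioi 0 := fun a ha => (le_min hx hy).trans_lt ha.1
  rw [setIntegral_eq_integral_of_forall_compl_eq_zero
      fun a ha => Set.indicator_of_notMem (fun h => ha (hsub h)) _,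
    integral_indicator_one measurableSet_uIoc, measureReal_def, Real.volume_uIoc,
    ENNReal.toReal_ofReal (abs_nonneg _)]

lemma integrableOn_indicator_uIoc (x y : ℝ) (s : Set ℝ) :
    IntegrableOn ((Ι x y).indicator (1 : ℝ → ℝ)) s :=
  ((integrable_indicator_iff measurableSet_uIoc).mpr
    (integrableOn_const (by simp [Real.volume_uIoc]))).integrableOn

lemma sum_mul_abs_mul_le_sqrt_mul_sqrt {ι : Type*} (s : Finset ι) {c : ι → ℝ}
    (hc : ∀ i ∈ s, 0 ≤ c i) (x y : ι → ℝ) :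
    ∑ i ∈ s, c i * |x i * y i| ≤ √(∑ i ∈ s, c i * x i ^ 2) * √(∑ i ∈ s, c i * y i ^ 2) := by
  rw [← Real.sqrt_mul (Finset.sum_nonneg fun i hi => mul_nonneg (hc i hi) (sq_nonneg _))]
  refine Real.le_sqrt_of_sq_le (Finset.sum_sq_le_sum_mul_sum_of_sq_le_mul s
    (fun i hi => mul_nonneg (hc i hi) (sq_nonneg _))
    (fun i hi => mul_nonneg (hc i hi) (sq_nonneg _)) fun i _ => le_of_eq ?_)
  rw [mul_pow, sq_abs]; ring

noncomputable def eigenOverlap {d : ℕ} {A B : Matrix (Fin d) (Fin d) ℂ} (hA : A.IsHermitian)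
    (hB : B.IsHermitian) (i j : Fin d) : ℝ :=
  ‖((hA.eigenvectorUnitary : Matrix (Fin d) (Fin d) ℂ)ᴴ * hB.eigenvectorUnitary) i j‖ ^ 2

section Hermitian

variable {d : ℕ} {A B : Matrix (Fin d) (Fin d) ℂ}

lemma eigenOverlap_nonneg (hA : A.IsHermitian) (hB : B.IsHermitian) (i j : Fin d) :
    0 ≤ eigenOverlap hA hB i j := by
  unfold eigenOverlap; positivity

lemma frobNorm_sub_of_isHermitian (hA : A.IsHermitian) (hB : B.IsHermitian) :
    frobNorm (A - B)
      = √(∑ i, ∑ j, eigenOverlap hA hB i j * (hA.eigenvalues i - hB.eigenvalues j) ^ 2) := by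
  conv_lhs =>
    rw [hA.eq_eigenvectorUnitary_mul_diagonal_mul, hB.eq_eigenvectorUnitary_mul_diagonal_mul]
  rw [frobNorm_conj_diagonal_sub hA.eigenvectorUnitary.2 hB.eigenvectorUnitary.2]
  simp [eigenOverlap, ← Complex.ofReal_sub, Complex.norm_real]

lemma frobNorm_add_of_isHermitian (hA : A.IsHermitian) (hB : B.IsHermitian) :
    frobNorm (A + B)
      = √(∑ i, ∑ j, eigenOverlap hA hB i j * (hA.eigenvalues i + hB.eigenvalues j) ^ 2) := by
  have hneg : A + B = (hA.eigenvectorUnitary : Matrix _ _ ℂ) *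
        diagonal (RCLike.ofReal ∘ hA.eigenvalues) * (hA.eigenvectorUnitary : Matrix _ _ ℂ)ᴴ -
      (hB.eigenvectorUnitary : Matrix _ _ ℂ) * diagonal (fun i => -(hB.eigenvalues i : ℂ)) *
        (hB.eigenvectorUnitary : Matrix _ _ ℂ)ᴴ := by
    rw [← diagonal_neg, Matrix.mul_neg, Matrix.neg_mul, sub_neg_eq_add]
    exact congr_arg₂ (· + ·) hA.eq_eigenvectorUnitary_mul_diagonal_mul
      hB.eq_eigenvectorUnitary_mul_diagonal_mul
  rw [hneg, frobNorm_conj_diagonal_sub hA.eigenvectorUnitary.2 hB.eigenvectorUnitary.2]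
  simp [eigenOverlap, ← Complex.ofReal_add, Complex.norm_real]

end Hermitian

section PosSemidef

variable {d : ℕ} {A B : Matrix (Fin d) (Fin d) ℂ}

lemma sq_frobNorm_specProjGE_sqrt_sub (hA : A.PosSemidef) (hB : B.PosSemidef) (a : ℝ) :
    frobNorm (specProjGE hA.1 √a - specProjGE hB.1 √a) ^ 2
      = ∑ i, ∑ j, eigenOverlap hA.1 hB.1 i j *
          (Ι (hA.1.eigenvalues i ^ 2) (hB.1.eigenvalues j ^ 2)).indicator 1 a := by
  rw [specProjGE, specProjGE, frobNorm_conj_diagonal_sub hA.1.eigenvectorUnitary.2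
    hB.1.eigenvectorUnitary.2, Real.sq_sqrt (by positivity)]
  simp only [norm_ite_sqrt_le_sub_ite_sqrt_le_sq (hA.eigenvalues_nonneg _)
    (hB.eigenvalues_nonneg _), eigenOverlap]

lemma integral_sq_frobNorm_specProjGE_sqrt_sub (hA : A.PosSemidef) (hB : B.PosSemidef) :
    ∫ a in Set.Ioi 0, frobNorm (specProjGE hA.1 √a - specProjGE hB.1 √a) ^ 2
      = ∑ i, ∑ j, eigenOverlap hA.1 hB.1 i j *
          |hB.1.eigenvalues j ^ 2 - hA.1.eigenvalues i ^ 2| := by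
  simp only [sq_frobNorm_specProjGE_sqrt_sub hA hB]
  rw [integral_finsetSum _ fun i _ => integrable_finsetSum _ fun j _ =>
    (integrableOn_indicator_uIoc _ _ _).const_mul _]
  refine Finset.sum_congr rfl fun i _ => ?_
  rw [integral_finsetSum _ fun j _ => (integrableOn_indicator_uIoc _ _ _).const_mul _]
  refine Finset.sum_congr rfl fun j _ => ?_
  rw [integral_const_mul, integral_Ioi_indicator_uIoc (sq_nonneg _) (sq_nonneg _)]

end PosSemidef

/-- Connes' lemma: for positive semidefinite `ρ, ρ'`,
`∫₀^∞ ‖χ_{≥√a}(ρ) − χ_{≥√a}(ρ')‖_F² da ≤ ‖ρ − ρ'‖_F ‖ρ + ρ'‖_F`. -/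
theorem connes_joint_continuity {d : ℕ} (ρ ρ' : Matrix (Fin d) (Fin d) ℂ)
    (hρ : ρ.PosSemidef) (hρ' : ρ'.PosSemidef) :
    (∫ a in Set.Ioi (0 : ℝ),
        frobNorm (specProjGE hρ.1 (Real.sqrt a) - specProjGE hρ'.1 (Real.sqrt a)) ^ 2)
      ≤ frobNorm (ρ - ρ') * frobNorm (ρ + ρ') := by
  rw [integral_sq_frobNorm_specProjGE_sqrt_sub hρ hρ', frobNorm_sub_of_isHermitian hρ.1 hρ'.1,
    frobNorm_add_of_isHermitian hρ.1 hρ'.1]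
  simp only [← Fintype.sum_prod_type']
  refine le_of_eq_of_le (Finset.sum_congr rfl fun p _ => ?_)
    (sum_mul_abs_mul_le_sqrt_mul_sqrt (Finset.univ : Finset (Fin d × Fin d))
      (fun p _ => eigenOverlap_nonneg hρ.1 hρ'.1 p.1 p.2)
      (fun p => hρ.1.eigenvalues p.1 - hρ'.1.eigenvalues p.2)
      (fun p => hρ.1.eigenvalues p.1 + hρ'.1.eigenvalues p.2))
  rw [abs_sub_comm, sq_sub_sq, mul_comm (_ + _)]
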